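/- Radon–Nikodým theorem: Let φ, ψ : A^{2m−1} → B(H) be symmetric invariant completely positive (2m−1)-linear maps with minimal Stinespring dilation (π₁,…,π_m, V, K) of φ. Then ψ ≤ φ (i.e., φ − ψ is completely positive) if and only if there exists a unique Δ ∈ ⋂_{p=1}^m π_p(A)′ with 0 ≤ Δ ≤ I such that ψ(a₁,…,a_{2m−1}) = V* Δ π₁(a_m) π₂(a_{m−1}a_{m+1}) ⋯ π_m(a₁a_{2m−1}) V for all a₁,…,a_{2m−1} ∈ A. -/

import Mathlib

/-!
Complete positivity of `ψ` says that `gramForm ψ` is a positive sesquilinear form on the free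
module `(Fin (r + 1) → A) →₀ H`, and `ψ ≤ φ` says that it is dominated by `gramForm φ`, which is
the inner product pulled back along `f ↦ ∑ₐ π(a) V (f a)`. Minimality makes this map dense, so
Cauchy–Schwarz and the Riesz representation give an operator `0 ≤ Δ ≤ 1` whose matrix
coefficients between the vectors `π(a) V g` are the values of `gram ψ`. Invariance of `ψ`
moves each `π_p(c)` from one side of these coefficients to the other, which puts `Δ` in the
commutant and identifies `ψ` with `φ_Δ`; density again gives uniqueness. Conversely, for `Δ` in
the commutant the Gram sums of `φ - φ_Δ` are `⟪ξ, (1 - Δ) ξ⟫` for a single vector `ξ`.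
-/

open scoped ComplexOrder

variable {A : Type*} [Ring A] [StarRing A] [Algebra ℂ A] [StarModule ℂ A]
variable {H : Type*} [NormedAddCommGroup H] [InnerProductSpace ℂ H] [CompleteSpace H]
variable {r : ℕ}

/-- The canonical semi-inner product of elementary tensors `a₁⊗…⊗a_m⊗g` and `b₁⊗…⊗b_m⊗h`
(`m = r+1`, odd case `k = 2m−1 = 2r+1`) associated to a `k`-linear map `φ`, namely
`⟨φ(b_m*,…,b₂*, b₁*a₁, a₂,…,a_m)g, h⟩`.  A `(2r+1)`-linear map `A^{2r+1} → B(H)` is encoded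
in uncurried form `φ : (Fin r → A) → A → (Fin r → A) → (H →L[ℂ] H)`, the middle argument
being the `m`-th variable.  (The paper's inner product `⟨u, v⟩` is linear in `u`; Mathlib's
`inner u v` is linear in `v`, so the paper's `⟨u, v⟩` is `inner v u` here.) -/
noncomputable def gram (φ : (Fin r → A) → A → (Fin r → A) → (H →L[ℂ] H))
    (a : Fin (r + 1) → A) (g : H) (b : Fin (r + 1) → A) (h : H) : ℂ :=
  inner ℂ h ((φ (fun i => star (b i.rev.succ)) (star (b 0) * a 0) (fun i => a i.succ)) g)

/-- `φ` is `(2r+1)`-linear: complex-linear in each of its `2r+1` variables. -/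
def IsMultilinearOdd (φ : (Fin r → A) → A → (Fin r → A) → (H →L[ℂ] H)) : Prop :=
  (∀ x z, IsLinearMap ℂ fun y => φ x y z) ∧
  (∀ x y z (i : Fin r), IsLinearMap ℂ fun u => φ (Function.update x i u) y z) ∧
  (∀ x y z (i : Fin r), IsLinearMap ℂ fun u => φ x y (Function.update z i u))

/-- `φ` is symmetric: `φ(a₁,…,a_k)* = φ(a_k*,…,a₁*)`. -/
def IsSymmMapOdd (φ : (Fin r → A) → A → (Fin r → A) → (H →L[ℂ] H)) : Prop :=
  ∀ x y z, star (φ x y z) = φ (fun i => star (z i.rev)) (star y) (fun i => star (x i.rev))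

/-- `φ` is invariant:
`φ(a₁c₁,…,a_{m−1}c_{m−1}, a_m, a_{m+1},…,a_{2m−1}) = φ(a₁,…,a_m, c_{m−1}a_{m+1},…,c₁a_{2m−1})`. -/
def IsInvariantOdd (φ : (Fin r → A) → A → (Fin r → A) → (H →L[ℂ] H)) : Prop :=
  ∀ (x c : Fin r → A) (y : A) (z : Fin r → A),
    φ (fun i => x i * c i) y z = φ x y (fun i => c i.rev * z i)

/-- `φ` is completely positive: the canonical sesquilinear form on `A^{⊗m} ⊗ H` is positive
semi-definite, i.e. all Gram sums over finite families of elementary tensors are `≥ 0`. -/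
def IsCPOdd (φ : (Fin r → A) → A → (Fin r → A) → (H →L[ℂ] H)) : Prop :=
  ∀ (n : ℕ) (a : Fin n → Fin (r + 1) → A) (g : Fin n → H),
    0 ≤ ∑ j, ∑ i, gram φ (a j) (g j) (a i) (g i)

/-- The action of `π_p(a)`: multiply the `p`-th tensor slot on the left by `a`. -/
def mulSlot (p : Fin (r + 1)) (a : A) (c : Fin (r + 1) → A) : Fin (r + 1) → A :=
  Function.update c p (a * c p)

variable {K : Type*} [NormedAddCommGroup K] [InnerProductSpace ℂ K] [CompleteSpace K]

/-- `π : p ↦ π_p` is a commuting family of unital `*`-homomorphisms `A → B(K)`. -/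
def IsRepFamily (π : Fin (r + 1) → A → (K →L[ℂ] K)) : Prop :=
  (∀ p, π p 1 = 1) ∧
  (∀ p a b, π p (a * b) = π p a * π p b) ∧
  (∀ p a b, π p (a + b) = π p a + π p b) ∧
  (∀ (p) (c : ℂ) (a), π p (c • a) = c • π p a) ∧
  (∀ p a, π p (star a) = star (π p a)) ∧
  (∀ p q a b, p ≠ q → Commute (π p a) (π q b))

/-- The product `π₁(a₁)π₂(a₂)⋯π_m(a_m)` (slots indexed by `Fin (r+1)`, `m = r+1`). -/
noncomputable def dilProd (π : Fin (r + 1) → A → (K →L[ℂ] K)) (a : Fin (r + 1) → A) :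
    K →L[ℂ] K :=
  (List.ofFn fun p => π p (a p)).prod

/-- The operator `π₁(a_m)π₂(a_{m−1}a_{m+1})⋯π_m(a₁a_{2m−1})`, where the `(2m−1)`-tuple
`(a₁,…,a_{2m−1})` is encoded as `x = (a₁,…,a_{m−1})`, `y = a_m`, `z = (a_{m+1},…,a_{2m−1})`. -/
noncomputable def dilOp (π : Fin (r + 1) → A → (K →L[ℂ] K))
    (x : Fin r → A) (y : A) (z : Fin r → A) : K →L[ℂ] K :=
  π 0 y * (List.ofFn fun i : Fin r => π i.succ (x i.rev * z i)).prod

/-- `(π, V, K)` is a Stinespring dilation of the `(2m−1)`-linear map `φ`:  `V` is a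
contraction and `φ(a₁,…,a_{2m−1}) = V* π₁(a_m)π₂(a_{m−1}a_{m+1})⋯π_m(a₁a_{2m−1}) V`. -/
def IsDilation (φ : (Fin r → A) → A → (Fin r → A) → (H →L[ℂ] H))
    (π : Fin (r + 1) → A → (K →L[ℂ] K)) (V : H →L[ℂ] K) : Prop :=
  ‖V‖ ≤ 1 ∧ ∀ x y z, φ x y z = ContinuousLinearMap.adjoint V ∘L (dilOp π x y z ∘L V)

/-- Minimality: `K` is the closed span of `{π₁(a₁)⋯π_m(a_m) V h}`. -/
def IsMinimalDil (π : Fin (r + 1) → A → (K →L[ℂ] K)) (V : H →L[ℂ] K) : Prop :=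
  (Submodule.span ℂ
    {ξ : K | ∃ (a : Fin (r + 1) → A) (h : H), ξ = dilProd π a (V h)}).topologicalClosure = ⊤

/-- `T` lies in the commutant `⋂_p π_p(A)′`. -/
def InCommutant (π : Fin (r + 1) → A → (K →L[ℂ] K)) (T : K →L[ℂ] K) : Prop :=
  ∀ (p : Fin (r + 1)) (a : A), Commute T (π p a)

/-- The map `φ_T(a₁,…,a_{2m−1}) = V* T π₁(a_m)π₂(a_{m−1}a_{m+1})⋯π_m(a₁a_{2m−1}) V`. -/
noncomputable def phiT (π : Fin (r + 1) → A → (K →L[ℂ] K)) (V : H →L[ℂ] K)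
    (T : K →L[ℂ] K) (x : Fin r → A) (y : A) (z : Fin r → A) : H →L[ℂ] H :=
  ContinuousLinearMap.adjoint V ∘L ((T ∘L dilOp π x y z) ∘L V)

open scoped InnerProductSpace

set_option linter.unusedSectionVars false

section PositiveForm

variable {E F : Type*} [AddCommGroup E] [Module ℂ E]
  [NormedAddCommGroup F] [InnerProductSpace ℂ F]

namespace LinearMap

lemma isSymm_of_forall_nonneg (Q : E →ₗ⋆[ℂ] E →ₗ[ℂ] ℂ) (hQ : ∀ f, 0 ≤ Q f f) : Q.IsSymm := by
  refine isSymm_def.mpr fun f g => ?_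
  have h₁ := (Complex.nonneg_iff.mp (hQ (f + g))).2
  have h₂ := (Complex.nonneg_iff.mp (hQ (f + Complex.I • g))).2
  have hf := (Complex.nonneg_iff.mp (hQ f)).2
  have hg := (Complex.nonneg_iff.mp (hQ g)).2
  simp only [map_add, map_smulₛₗ, add_apply, smul_apply, smul_eq_mul, RingHom.id_apply,
    Complex.add_re, Complex.add_im, Complex.mul_re, Complex.mul_im, Complex.conj_I,
    Complex.neg_re, Complex.neg_im, Complex.I_re, Complex.I_im] at h₁ h₂
  apply Complex.ext <;> simp only [Complex.conj_re, Complex.conj_im] <;> linarith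

lemma norm_apply_le_of_le_inner (Q : E →ₗ⋆[ℂ] E →ₗ[ℂ] ℂ) (hQ : ∀ f, 0 ≤ Q f f)
    (e : E →ₗ[ℂ] F) (hle : ∀ f, Q f f ≤ ⟪e f, e f⟫_ℂ) (f g : E) :
    ‖Q f g‖ ≤ ‖e f‖ * ‖e g‖ := by
  have hsymm := isSymm_def.mp (isSymm_of_forall_nonneg Q hQ)
  let _ : PreInnerProductSpace.Core ℂ E :=
    { inner f g := Q f g
      conj_inner_symm f g := hsymm g f
      re_inner_nonneg f := (Complex.nonneg_iff.mp (hQ f)).1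
      add_left f f' g := by simp
      smul_left f g c := by simp }
  have hcs : ‖Q f g‖ * ‖Q g f‖ ≤ (Q f f).re * (Q g g).re :=
    InnerProductSpace.Core.inner_mul_inner_self_le f g
  rw [← hsymm f g, RCLike.norm_conj] at hcs
  have hre : ∀ f, (Q f f).re ≤ ‖e f‖ ^ 2 := fun f => by
    simpa [inner_self_eq_norm_sq_to_K, ← Complex.ofReal_pow] using (Complex.le_def.mp (hle f)).1
  have hsq : ‖Q f g‖ ^ 2 ≤ (‖e f‖ * ‖e g‖) ^ 2 := by
    rw [sq, mul_pow]
    exact hcs.trans (mul_le_mul (hre f) (hre g) (Complex.nonneg_iff.mp (hQ g)).1 (sq_nonneg _))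
  exact (pow_le_pow_iff_left₀ (norm_nonneg _) (by positivity) two_ne_zero).mp hsq

lemma exists_extend₂_of_norm_le {G : Type*} [NormedAddCommGroup G] [NormedSpace ℂ G]
    (Q : E →ₗ⋆[ℂ] E →ₗ[ℂ] ℂ) (e : E →ₗ[ℂ] G) (he : DenseRange e) (C : ℝ)
    (hQ : ∀ f g, ‖Q f g‖ ≤ C * ‖e f‖ * ‖e g‖) :
    ∃ B : G →L⋆[ℂ] G →L[ℂ] ℂ, ∀ f g, B (e f) (e g) = Q f g := by
  have hext : ∀ f g, (Q f).extendOfNorm e (e g) = Q f g := fun f =>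
    extendOfNorm_eq he ⟨_, hQ f⟩
  let Q₁ : E →ₗ⋆[ℂ] G →L[ℂ] ℂ :=
    { toFun f := (Q f).extendOfNorm e
      map_add' f f' := extendOfNorm_unique he _ (hQ (f + f')) _ <| by ext g; simp [hext]
      map_smul' c f := extendOfNorm_unique he _ (hQ (c • f)) _ <| by ext g; simp [hext] }
  have hQ₁ : ∀ f, ‖Q₁ f‖ ≤ max C 0 * ‖e f‖ := fun f =>
    opNorm_extendOfNorm_le he (by positivity) fun g =>
      (hQ f g).trans (by gcongr; exact le_max_left _ _)
  refine ⟨Q₁.extendOfNorm e, fun f g => ?_⟩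
  rw [extendOfNorm_eq he ⟨_, hQ₁⟩]
  exact hext f g

theorem exists_isPositive_of_le_inner [CompleteSpace F] (Q : E →ₗ⋆[ℂ] E →ₗ[ℂ] ℂ)
    (e : E →ₗ[ℂ] F) (he : DenseRange e) (hQ : ∀ f, 0 ≤ Q f f)
    (hle : ∀ f, Q f f ≤ ⟪e f, e f⟫_ℂ) :
    ∃ T : F →L[ℂ] F, T.IsPositive ∧ (1 - T).IsPositive ∧ ∀ f g, ⟪e f, T (e g)⟫_ℂ = Q f g := by
  obtain ⟨B, hB⟩ := exists_extend₂_of_norm_le Q e he 1 fun f g => by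
    simpa [mul_assoc] using norm_apply_le_of_le_inner Q hQ e hle f g
  set T := InnerProductSpace.continuousLinearMapOfBilin B
  have hT : ∀ f g, ⟪T (e f), e g⟫_ℂ = Q f g := fun f g => by
    rw [InnerProductSpace.continuousLinearMapOfBilin_apply, hB]
  have hsymm : T.IsSymmetric := fun x y =>
    he.induction_on₂ (p := fun x y => ⟪T x, y⟫_ℂ = ⟪x, T y⟫_ℂ)
      (isClosed_eq (by fun_prop) (by fun_prop))
      (fun f g => by
        rw [hT, ← inner_conj_symm, hT]
        exact (isSymm_def.mp (isSymm_of_forall_nonneg Q hQ) g f).symm) x y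
  have hclosed : ∀ S : F →L[ℂ] F, IsClosed {x | 0 ≤ ⟪S x, x⟫_ℂ} := fun S =>
    isClosed_le continuous_const (by fun_prop)
  refine ⟨T, T.isPositive_iff.mpr ⟨hsymm, fun x => ?_⟩,
    (1 - T).isPositive_iff.mpr ⟨IsSymmetric.id.sub hsymm, fun x => ?_⟩,
    fun f g => (hsymm _ _).symm.trans (hT f g)⟩
  · exact he.induction_on (p := fun x => 0 ≤ ⟪T x, x⟫_ℂ) x (hclosed T) fun f => by
      rw [hT]; exact hQ f
  · refine he.induction_on (p := fun x => 0 ≤ ⟪(1 - T) x, x⟫_ℂ) x (hclosed _) fun f => ?_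
    change 0 ≤ ⟪e f - T (e f), e f⟫_ℂ
    rw [inner_sub_left, hT, sub_nonneg]
    exact hle f

end LinearMap

namespace ContinuousLinearMap

lemma eq_of_inner_single {α M : Type*} [AddCommMonoid M] [Module ℂ M]
    {e : (α →₀ M) →ₗ[ℂ] F} (he : DenseRange e) {T₁ T₂ : F →L[ℂ] F}
    (h : ∀ b m a m', ⟪e (.single b m), T₁ (e (.single a m'))⟫_ℂ
      = ⟪e (.single b m), T₂ (e (.single a m'))⟫_ℂ) : T₁ = T₂ := by
  have hform : ((innerₛₗ ℂ).compl₂ ((T₁ : F →ₗ[ℂ] F) ∘ₗ e)).comp e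
      = ((innerₛₗ ℂ).compl₂ ((T₂ : F →ₗ[ℂ] F) ∘ₗ e)).comp e :=
    Finsupp.lhom_ext fun b m => Finsupp.lhom_ext fun a m' => h b m a m'
  refine ext fun x => congrFun (he.equalizer T₁.continuous T₂.continuous (funext fun f' => ?_)) x
  exact he.eq_of_inner_right ℂ fun f => LinearMap.congr_fun₂ hform f f'

end ContinuousLinearMap

end PositiveForm

lemma Finsupp.sum_sum_nonneg {α M : Type*} [Zero M] (k : α → M → α → M → ℂ)
    (hk : ∀ (n : ℕ) (a : Fin n → α) (g : Fin n → M), 0 ≤ ∑ j, ∑ i, k (a j) (g j) (a i) (g i))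
    (f : α →₀ M) : 0 ≤ f.sum fun b h => f.sum fun a g => k a g b h := by
  set v : Fin f.support.card → α := fun i => f.support.equivFin.symm i
  have hsum : ∀ F : α → ℂ, ∑ b ∈ f.support, F b = ∑ i, F (v i) := fun F => by
    rw [← Finset.sum_coe_sort f.support F]
    exact (f.support.equivFin.symm.sum_comp (fun b : f.support => F b)).symm
  simp only [Finsupp.sum, hsum]
  rw [Finset.sum_comm]
  exact hk _ v (fun i => f (v i))

section ListProd

variable {M : Type*} [Monoid M]

lemma List.prod_ofFn_mul_prod_ofFn {n : ℕ} (f g : Fin n → M)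
    (hc : ∀ p q, p ≠ q → Commute (f p) (g q)) :
    (List.ofFn f).prod * (List.ofFn g).prod = (List.ofFn fun p => f p * g p).prod := by
  induction n with
  | zero => simp
  | succ n ih =>
    have hcomm : Commute (List.ofFn fun i : Fin n => f i.succ).prod (g 0) :=
      Commute.list_prod_left _ _ fun x hx => by
        obtain ⟨i, rfl⟩ := List.mem_ofFn.mp hx
        exact hc _ _ (Fin.succ_ne_zero i)
    simp only [List.ofFn_succ, List.prod_cons]
    rw [← ih _ _ fun p q hpq => hc _ _ ((Fin.succ_injective _).ne hpq), mul_assoc,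
      ← mul_assoc _ (g 0), hcomm.eq, mul_assoc, mul_assoc]

lemma List.prod_ofFn_eq_single {n : ℕ} (f : Fin n → M) (p : Fin n)
    (hf : ∀ q, q ≠ p → f q = 1) : (List.ofFn f).prod = f p := by
  induction n with
  | zero => exact p.elim0
  | succ n ih =>
    rw [List.ofFn_succ, List.prod_cons]
    rcases Fin.eq_zero_or_eq_succ p with rfl | ⟨p, rfl⟩
    · rw [List.prod_eq_one, mul_one]
      rintro x hx
      obtain ⟨i, rfl⟩ := List.mem_ofFn.mp hx
      exact hf _ (Fin.succ_ne_zero i)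
    · rw [hf 0 (Fin.succ_ne_zero p).symm, one_mul]
      exact ih _ p fun q hq => hf _ ((Fin.succ_injective _).ne hq)

lemma List.star_prod_ofFn [StarMul M] {n : ℕ} (f : Fin n → M)
    (hc : ∀ p q, p ≠ q → Commute (f p) (f q)) :
    star (List.ofFn f).prod = (List.ofFn fun p => star (f p)).prod := by
  induction n with
  | zero => simp
  | succ n ih =>
    have hcomm : Commute (List.ofFn fun i : Fin n => star (f i.succ)).prod (star (f 0)) :=
      Commute.list_prod_left _ _ fun x hx => by
        obtain ⟨i, rfl⟩ := List.mem_ofFn.mp hx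
        exact (hc _ _ (Fin.succ_ne_zero i).symm).star_star.symm
    simp only [List.ofFn_succ, List.prod_cons, star_mul]
    rw [ih _ fun p q hpq => hc _ _ ((Fin.succ_injective _).ne hpq), hcomm.eq]

end ListProd

section Dilation

variable {π : Fin (r + 1) → A → (K →L[ℂ] K)} {V : H →L[ℂ] K}

lemma IsRepFamily.map_one (hπ : IsRepFamily π) (p : Fin (r + 1)) : π p 1 = 1 := hπ.1 p

lemma IsRepFamily.map_mul (hπ : IsRepFamily π) (p : Fin (r + 1)) (a b : A) :
    π p (a * b) = π p a * π p b :=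
  hπ.2.1 p a b

lemma IsRepFamily.map_star (hπ : IsRepFamily π) (p : Fin (r + 1)) (a : A) :
    π p (star a) = star (π p a) :=
  hπ.2.2.2.2.1 p a

lemma IsRepFamily.commute (hπ : IsRepFamily π) {p q : Fin (r + 1)} (hpq : p ≠ q) (a b : A) :
    Commute (π p a) (π q b) :=
  hπ.2.2.2.2.2 p q a b hpq

lemma IsRepFamily.dilProd_mul (hπ : IsRepFamily π) (a b : Fin (r + 1) → A) :
    dilProd π a * dilProd π b = dilProd π (fun p => a p * b p) := by
  simp only [dilProd, hπ.map_mul]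
  exact List.prod_ofFn_mul_prod_ofFn _ _ fun p q hpq => hπ.commute hpq _ _

lemma IsRepFamily.adjoint_dilProd (hπ : IsRepFamily π) (a : Fin (r + 1) → A) :
    (dilProd π a).adjoint = dilProd π (fun p => star (a p)) := by
  rw [← ContinuousLinearMap.star_eq_adjoint, dilProd,
    List.star_prod_ofFn _ fun p q hpq => hπ.commute hpq _ _]
  simp only [dilProd, hπ.map_star]

lemma IsRepFamily.dilProd_one (hπ : IsRepFamily π) : dilProd π (fun _ => 1) = 1 :=
  List.prod_eq_one fun x hx => by
    obtain ⟨p, rfl⟩ := List.mem_ofFn.mp hx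
    exact hπ.map_one p

lemma IsRepFamily.mul_dilProd (hπ : IsRepFamily π) (p : Fin (r + 1)) (c : A)
    (a : Fin (r + 1) → A) : π p c * dilProd π a = dilProd π (mulSlot p c a) := by
  have hc : dilProd π (Function.update (fun _ => 1) p c) = π p c := by
    rw [dilProd, List.prod_ofFn_eq_single _ p fun q hq => by
      rw [Function.update_of_ne hq, hπ.map_one], Function.update_self]
  rw [← hc, hπ.dilProd_mul]
  congr 1
  funext q
  rcases eq_or_ne q p with rfl | hq
  · simp [mulSlot]
  · simp [mulSlot, Function.update_of_ne hq]

lemma dilOp_eq_dilProd (x : Fin r → A) (y : A) (z : Fin r → A) :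
    dilOp π x y z = dilProd π (Fin.cons y fun i => x i.rev * z i) := by
  simp [dilOp, dilProd, List.ofFn_succ]

lemma InCommutant.commute_dilProd {T : K →L[ℂ] K} (hT : InCommutant π T) (a : Fin (r + 1) → A) :
    Commute T (dilProd π a) :=
  Commute.list_prod_right _ _ fun x hx => by
    obtain ⟨p, rfl⟩ := List.mem_ofFn.mp hx
    exact hT p (a p)

lemma gram_phiT (hπ : IsRepFamily π) {T : K →L[ℂ] K} (hT : InCommutant π T)
    (a : Fin (r + 1) → A) (g : H) (b : Fin (r + 1) → A) (h : H) :
    gram (phiT π V T) a g b h = ⟪dilProd π b (V h), T (dilProd π a (V g))⟫_ℂ := by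
  have hop : dilOp π (fun i => star (b i.rev.succ)) (star (b 0) * a 0) (fun i => a i.succ)
      = dilProd π (fun p => star (b p)) * dilProd π a := by
    rw [dilOp_eq_dilProd, hπ.dilProd_mul]
    congr 1
    funext p
    refine Fin.cases ?_ (fun i => ?_) p <;> simp
  simp only [gram, phiT, hop, ContinuousLinearMap.comp_apply, mul_apply_eq_comp]
  rw [ContinuousLinearMap.adjoint_inner_right, ← mul_apply_eq_comp T,
    (hT.commute_dilProd _).eq, mul_apply_eq_comp, ← hπ.adjoint_dilProd,
    ContinuousLinearMap.adjoint_inner_right]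

lemma IsDilation.eq_phiT_one {φ : (Fin r → A) → A → (Fin r → A) → (H →L[ℂ] H)}
    (hφ : IsDilation φ π V) : φ = phiT π V 1 :=
  funext₃ fun x y z => by rw [hφ.2, phiT, ContinuousLinearMap.one_def, ContinuousLinearMap.id_comp]

lemma gram_eq_inner {φ : (Fin r → A) → A → (Fin r → A) → (H →L[ℂ] H)} (hπ : IsRepFamily π)
    (hφ : IsDilation φ π V) (a : Fin (r + 1) → A) (g : H) (b : Fin (r + 1) → A) (h : H) :
    gram φ a g b h = ⟪dilProd π b (V h), dilProd π a (V g)⟫_ℂ := by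
  rw [hφ.eq_phiT_one, gram_phiT hπ fun _ _ => Commute.one_left _, one_apply_eq_self]

end Dilation

section Invariance

variable {ψ : (Fin r → A) → A → (Fin r → A) → (H →L[ℂ] H)}

lemma IsInvariantOdd.gram_mulSlot (hψ : IsInvariantOdd ψ) (p : Fin (r + 1)) (c : A)
    (a : Fin (r + 1) → A) (g : H) (b : Fin (r + 1) → A) (h : H) :
    gram ψ (mulSlot p c a) g b h = gram ψ a g (mulSlot p (star c) b) h := by
  induction p using Fin.cases with
  | zero => simp [gram, mulSlot, mul_assoc]
  | succ p =>
    -- invariance with the multiplier `c` in slot `p.rev` and `1` elsewhere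
    let c' : Fin r → A := Function.update 1 p.rev c
    have hz : (fun i : Fin r => Function.update a p.succ (c * a p.succ) i.succ)
        = fun i => c' i.rev * a i.succ := by
      funext i
      rcases eq_or_ne i p with rfl | hi
      · simp [c']
      · simp [c', Function.update_of_ne ((Fin.succ_injective _).ne hi),
          Function.update_of_ne (Fin.rev_injective.ne hi)]
    have hx : (fun i : Fin r => star (Function.update b p.succ (star c * b p.succ) i.rev.succ))
        = fun i => star (b i.rev.succ) * c' i := by
      funext i
      rcases eq_or_ne i p.rev with rfl | hi
      · simp [c']
      · have hi' : i.rev ≠ p := by rwa [Ne, Fin.rev_eq_iff]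
        simp [c', Function.update_of_ne hi, Function.update_of_ne ((Fin.succ_injective _).ne hi')]
    simp only [gram, mulSlot, Function.update_of_ne (Fin.succ_ne_zero p).symm, hz, hx]
    rw [hψ]

lemma IsInvariantOdd.inner_apply_eq_gram (hψ : IsInvariantOdd ψ) (x : Fin r → A) (y : A)
    (z : Fin r → A) (g h : H) :
    ⟪h, ψ x y z g⟫_ℂ = gram ψ (Fin.cons y fun i => x i.rev * z i) g (fun _ => 1) h := by
  simpa [gram] using congrArg (fun T : H →L[ℂ] H => ⟪h, T g⟫_ℂ) (hψ (fun _ => 1) x y z)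

end Invariance

/-- `(Fin (r + 1) → A) →₀ H` plays the role of the algebraic tensor product `A^{⊗m} ⊗ H`. -/
noncomputable def gramForm (φ : (Fin r → A) → A → (Fin r → A) → (H →L[ℂ] H)) :
    ((Fin (r + 1) → A) →₀ H) →ₗ⋆[ℂ] ((Fin (r + 1) → A) →₀ H) →ₗ[ℂ] ℂ :=
  Finsupp.lsum ℂ fun b => (Finsupp.lsum ℂ fun a => ((innerₛₗ ℂ).compl₂
    (φ (fun i => star (b i.rev.succ)) (star (b 0) * a 0) (fun i => a i.succ) : H →ₗ[ℂ] H)).flip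
  ).flip

lemma gramForm_apply (φ : (Fin r → A) → A → (Fin r → A) → (H →L[ℂ] H))
    (f f' : (Fin (r + 1) → A) →₀ H) :
    gramForm φ f f' = f.sum fun b h => f'.sum fun a g => gram φ a g b h := by
  simp [gramForm, Finsupp.lsum_apply, LinearMap.finsupp_sum_apply, gram]

lemma gramForm_single (φ : (Fin r → A) → A → (Fin r → A) → (H →L[ℂ] H))
    (a : Fin (r + 1) → A) (g : H) (b : Fin (r + 1) → A) (h : H) :
    gramForm φ (.single b h) (.single a g) = gram φ a g b h := by
  simp [gramForm, gram]

noncomputable def dilMap (π : Fin (r + 1) → A → (K →L[ℂ] K)) (V : H →L[ℂ] K) :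
    ((Fin (r + 1) → A) →₀ H) →ₗ[ℂ] K :=
  Finsupp.lsum ℂ fun a => ((dilProd π a).comp V : H →ₗ[ℂ] K)

section DilMap

variable {π : Fin (r + 1) → A → (K →L[ℂ] K)} {V : H →L[ℂ] K}

lemma dilMap_apply (f : (Fin (r + 1) → A) →₀ H) :
    dilMap π V f = f.sum fun a g => dilProd π a (V g) :=
  rfl

lemma dilMap_single (a : Fin (r + 1) → A) (g : H) :
    dilMap π V (.single a g) = dilProd π a (V g) :=
  Finsupp.lsum_single ℂ _ a g

lemma IsMinimalDil.denseRange_dilMap (hmin : IsMinimalDil π V) : DenseRange (dilMap π V) := by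
  have hle : Submodule.span ℂ {ξ : K | ∃ (a : Fin (r + 1) → A) (h : H), ξ = dilProd π a (V h)}
      ≤ LinearMap.range (dilMap π V) :=
    Submodule.span_le.mpr fun _ ⟨a, g, hξ⟩ =>
      ⟨.single a g, by rw [dilMap_single, hξ]⟩
  have htop := Submodule.topologicalClosure_mono hle
  rw [hmin, top_le_iff] at htop
  rw [DenseRange, ← LinearMap.coe_range]
  exact Submodule.dense_iff_topologicalClosure_eq_top.mpr htop

lemma inner_dilMap {φ : (Fin r → A) → A → (Fin r → A) → (H →L[ℂ] H)} (hπ : IsRepFamily π)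
    (hφ : IsDilation φ π V) (f f' : (Fin (r + 1) → A) →₀ H) :
    ⟪dilMap π V f, dilMap π V f'⟫_ℂ = gramForm φ f f' := by
  simp only [dilMap_apply, gramForm_apply, gram_eq_inner hπ hφ, Finsupp.sum, sum_inner, inner_sum]
  exact Finset.sum_comm

end DilMap

section RadonNikodym

variable {π : Fin (r + 1) → A → (K →L[ℂ] K)} {V : H →L[ℂ] K}
variable {φ ψ : (Fin r → A) → A → (Fin r → A) → (H →L[ℂ] H)}

lemma IsMinimalDil.ext (hmin : IsMinimalDil π V) {T₁ T₂ : K →L[ℂ] K}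
    (hT : ∀ a g b h, ⟪dilProd π b (V h), T₁ (dilProd π a (V g))⟫_ℂ
      = ⟪dilProd π b (V h), T₂ (dilProd π a (V g))⟫_ℂ) : T₁ = T₂ :=
  ContinuousLinearMap.eq_of_inner_single hmin.denseRange_dilMap fun b h a g => by
    simpa only [dilMap_single] using hT a g b h

lemma exists_isPositive_inner_eq_gram (hπ : IsRepFamily π) (hφ : IsDilation φ π V)
    (hmin : IsMinimalDil π V) (hψ : IsCPOdd ψ)
    (hdom : ∀ (n : ℕ) (a : Fin n → Fin (r + 1) → A) (g : Fin n → H),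
      0 ≤ ∑ j, ∑ i, (gram φ (a j) (g j) (a i) (g i) - gram ψ (a j) (g j) (a i) (g i))) :
    ∃ Δ : K →L[ℂ] K, Δ.IsPositive ∧ (1 - Δ).IsPositive ∧
      ∀ a g b h, ⟪dilProd π b (V h), Δ (dilProd π a (V g))⟫_ℂ = gram ψ a g b h := by
  have hpos : ∀ f, 0 ≤ gramForm ψ f f := fun f => by
    rw [gramForm_apply]
    exact Finsupp.sum_sum_nonneg _ hψ f
  have hle : ∀ f, gramForm ψ f f ≤ ⟪dilMap π V f, dilMap π V f⟫_ℂ := fun f => by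
    rw [inner_dilMap hπ hφ, ← sub_nonneg, gramForm_apply, gramForm_apply]
    simpa only [Finsupp.sum_sub] using
      Finsupp.sum_sum_nonneg (fun a g b h => gram φ a g b h - gram ψ a g b h) hdom f
  obtain ⟨Δ, hΔ, hΔ₁, hΔψ⟩ :=
    LinearMap.exists_isPositive_of_le_inner _ _ hmin.denseRange_dilMap hpos hle
  refine ⟨Δ, hΔ, hΔ₁, fun a g b h => ?_⟩
  simpa [dilMap_single, gramForm_single] using hΔψ (.single b h) (.single a g)

lemma inCommutant_of_inner_eq_gram (hπ : IsRepFamily π) (hmin : IsMinimalDil π V)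
    (hψ : IsInvariantOdd ψ) {Δ : K →L[ℂ] K}
    (hΔ : ∀ a g b h, ⟪dilProd π b (V h), Δ (dilProd π a (V g))⟫_ℂ = gram ψ a g b h) :
    InCommutant π Δ := fun p c => hmin.ext fun a g b h =>
  calc ⟪dilProd π b (V h), (Δ * π p c) (dilProd π a (V g))⟫_ℂ
      = gram ψ (mulSlot p c a) g b h := by
        rw [mul_apply_eq_comp, ← mul_apply_eq_comp (π p c), hπ.mul_dilProd, hΔ]
    _ = gram ψ a g (mulSlot p (star c) b) h := hψ.gram_mulSlot p c a g b h
    _ = ⟪π p (star c) (dilProd π b (V h)), Δ (dilProd π a (V g))⟫_ℂ := by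
        rw [← mul_apply_eq_comp, hπ.mul_dilProd, hΔ]
    _ = ⟪dilProd π b (V h), (π p c * Δ) (dilProd π a (V g))⟫_ℂ := by
        rw [hπ.map_star, ContinuousLinearMap.star_eq_adjoint,
          ContinuousLinearMap.adjoint_inner_left, mul_apply_eq_comp]

lemma eq_phiT_of_inner_eq_gram (hπ : IsRepFamily π) (hψ : IsInvariantOdd ψ) {Δ : K →L[ℂ] K}
    (hΔ : ∀ a g b h, ⟪dilProd π b (V h), Δ (dilProd π a (V g))⟫_ℂ = gram ψ a g b h) :
    ψ = phiT π V Δ :=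
  funext₃ fun x y z => ContinuousLinearMap.ext fun g => ext_inner_left ℂ fun h => by
    rw [hψ.inner_apply_eq_gram, ← hΔ, hπ.dilProd_one, one_apply_eq_self, ← dilOp_eq_dilProd]
    simp [phiT, ContinuousLinearMap.adjoint_inner_right]

lemma sum_gram_sub_gram_phiT_nonneg (hπ : IsRepFamily π) (hφ : IsDilation φ π V)
    {Δ : K →L[ℂ] K} (hΔ : InCommutant π Δ) (hΔ₁ : (1 - Δ).IsPositive)
    (n : ℕ) (a : Fin n → Fin (r + 1) → A) (g : Fin n → H) :
    0 ≤ ∑ j, ∑ i, (gram φ (a j) (g j) (a i) (g i) - gram (phiT π V Δ) (a j) (g j) (a i) (g i)) := by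
  have hterm : ∀ j i, gram φ (a j) (g j) (a i) (g i) - gram (phiT π V Δ) (a j) (g j) (a i) (g i)
      = ⟪dilProd π (a i) (V (g i)), (1 - Δ) (dilProd π (a j) (V (g j)))⟫_ℂ := fun j i => by
    rw [gram_eq_inner hπ hφ, gram_phiT hπ hΔ, ← inner_sub_right]
    rfl
  simp_rw [hterm, ← sum_inner, ← inner_sum, ← map_sum]
  exact hΔ₁.inner_nonneg_right _

end RadonNikodym

theorem stmt16_general (φ ψ : (Fin r → A) → A → (Fin r → A) → (H →L[ℂ] H))
    (hinvψ : IsInvariantOdd ψ) (hcpψ : IsCPOdd ψ)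
    (π : Fin (r + 1) → A → (K →L[ℂ] K)) (V : H →L[ℂ] K)
    (hrep : IsRepFamily π) (hdil : IsDilation φ π V) (hmin : IsMinimalDil π V) :
    (∀ (n : ℕ) (a : Fin n → Fin (r + 1) → A) (g : Fin n → H),
        0 ≤ ∑ j, ∑ i,
          (gram φ (a j) (g j) (a i) (g i) - gram ψ (a j) (g j) (a i) (g i))) ↔
      ∃! Δ : K →L[ℂ] K,
        InCommutant π Δ ∧ Δ.IsPositive ∧ ((1 : K →L[ℂ] K) - Δ).IsPositive ∧
          ∀ (x : Fin r → A) (y : A) (z : Fin r → A), ψ x y z = phiT π V Δ x y z := by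
  constructor
  · intro hdom
    obtain ⟨Δ, hΔ, hΔ₁, hΔψ⟩ := exists_isPositive_inner_eq_gram hrep hdil hmin hcpψ hdom
    refine ⟨Δ, ⟨inCommutant_of_inner_eq_gram hrep hmin hinvψ hΔψ, hΔ, hΔ₁,
      congr_fun₃ (eq_phiT_of_inner_eq_gram hrep hinvψ hΔψ)⟩, ?_⟩
    rintro Δ' ⟨hΔ', -, -, hψ⟩
    obtain rfl : ψ = phiT π V Δ' := funext₃ hψ
    exact hmin.ext fun a g b h => by rw [hΔψ, gram_phiT hrep hΔ']
  · rintro ⟨Δ, ⟨hΔ, -, hΔ₁, hψ⟩, -⟩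
    obtain rfl : ψ = phiT π V Δ := funext₃ hψ
    exact sum_gram_sub_gram_phiT_nonneg hrep hdil hΔ hΔ₁

/-- Radon–Nikodým theorem: let `φ, ψ` be symmetric invariant completely positive
`(2m−1)`-linear maps and `(π, V, K)` a minimal Stinespring dilation of `φ`.  Then `ψ ≤ φ`
(i.e. `φ − ψ` is completely positive) iff there is a unique `Δ ∈ ⋂_p π_p(A)′` with
`0 ≤ Δ ≤ I` such that `ψ(a₁,…,a_{2m−1}) = V* Δ π₁(a_m)π₂(a_{m−1}a_{m+1})⋯π_m(a₁a_{2m−1})V`. -/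
theorem stmt16 (φ ψ : (Fin r → A) → A → (Fin r → A) → (H →L[ℂ] H))
    (hlinφ : IsMultilinearOdd φ) (hsymmφ : IsSymmMapOdd φ)
    (hinvφ : IsInvariantOdd φ) (hcpφ : IsCPOdd φ)
    (hlinψ : IsMultilinearOdd ψ) (hsymmψ : IsSymmMapOdd ψ)
    (hinvψ : IsInvariantOdd ψ) (hcpψ : IsCPOdd ψ)
    (π : Fin (r + 1) → A → (K →L[ℂ] K)) (V : H →L[ℂ] K)
    (hrep : IsRepFamily π) (hdil : IsDilation φ π V) (hmin : IsMinimalDil π V) :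
    (∀ (n : ℕ) (a : Fin n → Fin (r + 1) → A) (g : Fin n → H),
        0 ≤ ∑ j, ∑ i,
          (gram φ (a j) (g j) (a i) (g i) - gram ψ (a j) (g j) (a i) (g i))) ↔
      ∃! Δ : K →L[ℂ] K,
        InCommutant π Δ ∧ Δ.IsPositive ∧ ((1 : K →L[ℂ] K) - Δ).IsPositive ∧
          ∀ (x : Fin r → A) (y : A) (z : Fin r → A), ψ x y z = phiT π V Δ x y z :=
  stmt16_general φ ψ hinvψ hcpψ π V hrep hdil hmin
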